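/- Data processing inequality for compound inf-information rates: Let S be a nonempty set and, for each integer n ≥ 1, let A_n, B_n, C_n be nonempty finite types and P_{n,s} ∈ PMF(A_n × B_n × C_n) a joint distribution for each s ∈ S under which X → Y → Z is a Markov chain, i.e. P_{n,s}(x,y,z)·P^Y_{n,s}(y) = P^{XY}_{n,s}(x,y)·P^{YZ}_{n,s}(y,z) for all (x,y,z). Then, assuming the quantities involved are finite, cinf I(X;Y) ≥ cinf I(X;Z); moreover, if csup I(X;Y|Z) = 0 then cinf I(X;Y) = cinf I(X;Z). -/

import Mathlib

open Filter
open scoped ENNReal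

noncomputable section

/-- Generic compound infimum set: rates `R` with `sup_s P_{W∼P_{n,s}}(f_{n,s}(W) ≤ R) → 0`. -/
def cinfSet {S : Type*} {T : ℕ → Type*} [∀ n, Fintype (T n)]
    (P : ∀ n, S → PMF (T n)) (f : ∀ n, S → T n → ℝ) : Set ℝ :=
  {R : ℝ | Tendsto (fun n => ⨆ s : S,
      ∑ w : T n, {w' : T n | f n s w' ≤ R}.indicator (fun w' => P n s w') w)
    atTop (nhds 0)}

/-- Generic compound infimum. -/
def cinf {S : Type*} {T : ℕ → Type*} [∀ n, Fintype (T n)]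
    (P : ∀ n, S → PMF (T n)) (f : ∀ n, S → T n → ℝ) : ℝ := sSup (cinfSet P f)

/-- Generic compound supremum set: rates `R` with `sup_s P_{W∼P_{n,s}}(f_{n,s}(W) ≥ R) → 0`. -/
def csupSet {S : Type*} {T : ℕ → Type*} [∀ n, Fintype (T n)]
    (P : ∀ n, S → PMF (T n)) (f : ∀ n, S → T n → ℝ) : Set ℝ :=
  {R : ℝ | Tendsto (fun n => ⨆ s : S,
      ∑ w : T n, {w' : T n | R ≤ f n s w'}.indicator (fun w' => P n s w') w)
    atTop (nhds 0)}

/-- Generic compound supremum. -/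
def csup {S : Type*} {T : ℕ → Type*} [∀ n, Fintype (T n)]
    (P : ∀ n, S → PMF (T n)) (f : ∀ n, S → T n → ℝ) : ℝ := sInf (csupSet P f)

section Triple

variable {S : Type*} {A B C : ℕ → Type*}
  [∀ n, Fintype (A n)] [∀ n, Fintype (B n)] [∀ n, Fintype (C n)]

/-- Marginal on `A n` of a joint PMF on `A n × B n × C n`. -/
def mX (P : ∀ n, S → PMF (A n × B n × C n)) (n : ℕ) (s : S) (x : A n) : ℝ≥0∞ :=
  ∑ y : B n, ∑ c : C n, P n s (x, y, c)

/-- Marginal on `B n`. -/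
def mY (P : ∀ n, S → PMF (A n × B n × C n)) (n : ℕ) (s : S) (y : B n) : ℝ≥0∞ :=
  ∑ x : A n, ∑ c : C n, P n s (x, y, c)

/-- Marginal on `C n`. -/
def mZ (P : ∀ n, S → PMF (A n × B n × C n)) (n : ℕ) (s : S) (c : C n) : ℝ≥0∞ :=
  ∑ x : A n, ∑ y : B n, P n s (x, y, c)

/-- Marginal on `A n × B n`. -/
def mXY (P : ∀ n, S → PMF (A n × B n × C n)) (n : ℕ) (s : S) (x : A n) (y : B n) : ℝ≥0∞ :=
  ∑ c : C n, P n s (x, y, c)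

/-- Marginal on `A n × C n`. -/
def mXZ (P : ∀ n, S → PMF (A n × B n × C n)) (n : ℕ) (s : S) (x : A n) (c : C n) : ℝ≥0∞ :=
  ∑ y : B n, P n s (x, y, c)

/-- Marginal on `B n × C n`. -/
def mYZ (P : ∀ n, S → PMF (A n × B n × C n)) (n : ℕ) (s : S) (y : B n) (c : C n) : ℝ≥0∞ :=
  ∑ x : A n, P n s (x, y, c)

/-- Information density rate `i_{n,s}(X;Y)`. -/
def iXY (P : ∀ n, S → PMF (A n × B n × C n)) (n : ℕ) (s : S) (w : A n × B n × C n) : ℝ :=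
  (1 / (n : ℝ)) * Real.log ((mXY P n s w.1 w.2.1).toReal /
    ((mX P n s w.1).toReal * (mY P n s w.2.1).toReal))

/-- Information density rate `i_{n,s}(X;Z)`. -/
def iXZ (P : ∀ n, S → PMF (A n × B n × C n)) (n : ℕ) (s : S) (w : A n × B n × C n) : ℝ :=
  (1 / (n : ℝ)) * Real.log ((mXZ P n s w.1 w.2.2).toReal /
    ((mX P n s w.1).toReal * (mZ P n s w.2.2).toReal))

/-- Conditional information density rate `i_{n,s}(X;Y|Z)`, i.e.
`(1/n)·ln( P(x,y,z)·P(z) / (P(x,z)·P(y,z)) )`. -/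
def iXYgZ (P : ∀ n, S → PMF (A n × B n × C n)) (n : ℕ) (s : S) (w : A n × B n × C n) : ℝ :=
  (1 / (n : ℝ)) * Real.log (((P n s w).toReal * (mZ P n s w.2.2).toReal) /
    ((mXZ P n s w.1 w.2.2).toReal * (mYZ P n s w.2.1 w.2.2).toReal))

end Triple

/-!
On the support of `P_{n,s}` the Markov property gives the chain rule
`i(X;Y) = i(X;Z) + i(X;Y|Z)`. The conditional density is the log-likelihood ratio of `P_{n,s}`
against `P_{X|Z} P_{Y|Z} P_Z`, so a change of measure gives `P(i(X;Y|Z) ≤ -γ) ≤ e^{-nγ}`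
uniformly in `s`. A union bound then puts `R - γ` in the compound infimum set of `I(X;Y)` whenever
`R` is in that of `I(X;Z)`. Conversely, `csup I(X;Y|Z) = 0` makes `P(i(X;Y|Z) ≥ γ)` vanish
uniformly, and the union bound the other way puts `R - γ` in the set of `I(X;Z)` whenever `R` is
in that of `I(X;Y)`.
-/

open MeasureTheory

theorem PMF.sum_indicator_eq_toOuterMeasure {α : Type*} [Fintype α] (p : PMF α) (E : Set α) :
    ∑ w, E.indicator (fun w => p w) w = p.toOuterMeasure E := by
  rw [PMF.toOuterMeasure_apply, tsum_fintype]

theorem PMF.toOuterMeasure_log_div_le_neg_le {α : Type*} [Fintype α] (p : PMF α) (q : α → ℝ≥0∞)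
    (hq : ∀ w, p w ≠ 0 → (q w).toReal ≠ 0) (t : ℝ) :
    p.toOuterMeasure {w | Real.log ((p w).toReal / (q w).toReal) ≤ -t} ≤
      ENNReal.ofReal (Real.exp (-t)) * ∑ w, q w := by
  rw [← PMF.sum_indicator_eq_toOuterMeasure, Finset.mul_sum]
  refine Finset.sum_le_sum fun w _ => ?_
  by_cases hpw : p w = 0
  · exact (Set.indicator_le_self _ _ w).trans (by simp [hpw])
  by_cases hlog : w ∈ {w | Real.log ((p w).toReal / (q w).toReal) ≤ -t}
  · obtain ⟨hq0, hqtop⟩ := ENNReal.toReal_ne_zero.1 (hq w hpw)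
    have hp : 0 < (p w).toReal := ENNReal.toReal_pos hpw (p.apply_ne_top w)
    have hq : 0 < (q w).toReal := ENNReal.toReal_pos hq0 hqtop
    have hratio : (p w).toReal ≤ Real.exp (-t) * (q w).toReal := by
      rw [← div_le_iff₀ hq, ← Real.log_le_iff_le_exp (div_pos hp hq)]
      exact hlog
    rw [Set.indicator_of_mem hlog, ← ENNReal.ofReal_toReal (p.apply_ne_top w),
      ← ENNReal.ofReal_toReal hqtop, ← ENNReal.ofReal_mul (Real.exp_pos _).le]
    exact ENNReal.ofReal_le_ofReal hratio
  · simp [Set.indicator_of_notMem hlog]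

theorem Fintype.sum_prod_prod_eq_sum_sum_sum {α β γ M : Type*} [Fintype α] [Fintype β]
    [Fintype γ] [AddCommMonoid M] (f : α × β × γ → M) :
    ∑ w, f w = ∑ c, ∑ a, ∑ b, f (a, b, c) := by
  simp only [Fintype.sum_prod_type]
  exact (Finset.sum_congr rfl fun _ _ => Finset.sum_comm).trans Finset.sum_comm

theorem csSup_le_csSup_of_forall_sub_mem {s t : Set ℝ} (hs : s.Nonempty) (ht : BddAbove t)
    (h : ∀ a ∈ s, ∀ ε > 0, a - ε ∈ t) : sSup s ≤ sSup t :=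
  le_of_forall_pos_le_add fun ε hε =>
    csSup_le hs fun a ha => by linarith [le_csSup ht (h a ha ε hε)]

section Compound

variable {S : Type*} {T : ℕ → Type*}

theorem tendsto_iSup_toOuterMeasure_of_subset_union (P : ∀ n, S → PMF (T n))
    {E F G : ∀ n, S → Set (T n)} (hsub : ∀ n s, E n s ∩ (P n s).support ⊆ F n s ∪ G n s)
    (hF : Tendsto (fun n => ⨆ s, (P n s).toOuterMeasure (F n s)) atTop (nhds 0))
    (hG : Tendsto (fun n => ⨆ s, (P n s).toOuterMeasure (G n s)) atTop (nhds 0)) :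
    Tendsto (fun n => ⨆ s, (P n s).toOuterMeasure (E n s)) atTop (nhds 0) := by
  refine tendsto_of_tendsto_of_tendsto_of_le_of_le tendsto_const_nhds
    (by simpa only [add_zero] using hF.add hG) (fun _ => zero_le) fun n => ?_
  refine iSup_le fun s => ?_
  calc (P n s).toOuterMeasure (E n s)
      = (P n s).toOuterMeasure (E n s ∩ (P n s).support) :=
        (PMF.toOuterMeasure_apply_inter_support _ _).symm
    _ ≤ (P n s).toOuterMeasure (F n s ∪ G n s) := measure_mono (hsub n s)
    _ ≤ (P n s).toOuterMeasure (F n s) + (P n s).toOuterMeasure (G n s) := measure_union_le _ _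
    _ ≤ _ := add_le_add (le_iSup (fun s => (P n s).toOuterMeasure (F n s)) s)
        (le_iSup (fun s => (P n s).toOuterMeasure (G n s)) s)

variable [∀ n, Fintype (T n)]

theorem mem_cinfSet_iff (P : ∀ n, S → PMF (T n)) (f : ∀ n, S → T n → ℝ) (R : ℝ) :
    R ∈ cinfSet P f ↔
      Tendsto (fun n => ⨆ s, (P n s).toOuterMeasure {w | f n s w ≤ R}) atTop (nhds 0) := by
  simp only [cinfSet, Set.mem_ofPred_eq, PMF.sum_indicator_eq_toOuterMeasure]

theorem mem_csupSet_iff (P : ∀ n, S → PMF (T n)) (f : ∀ n, S → T n → ℝ) (R : ℝ) :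
    R ∈ csupSet P f ↔
      Tendsto (fun n => ⨆ s, (P n s).toOuterMeasure {w | R ≤ f n s w}) atTop (nhds 0) := by
  simp only [csupSet, Set.mem_ofPred_eq, PMF.sum_indicator_eq_toOuterMeasure]

variable {P : ∀ n, S → PMF (T n)} {f g h : ∀ n, S → T n → ℝ} {a b : ℝ}

theorem add_mem_cinfSet (hle : ∀ n s w, P n s w ≠ 0 → g n s w + h n s w ≤ f n s w)
    (hg : a ∈ cinfSet P g) (hh : b ∈ cinfSet P h) : a + b ∈ cinfSet P f := by
  rw [mem_cinfSet_iff] at hg hh ⊢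
  refine tendsto_iSup_toOuterMeasure_of_subset_union P (fun n s w ⟨hw, hsupp⟩ => ?_) hg hh
  by_contra! hout
  simp only [Set.mem_union, Set.mem_ofPred_eq, not_or, not_le] at hw hout
  linarith [hle n s w hsupp]

theorem sub_mem_cinfSet (hle : ∀ n s w, P n s w ≠ 0 → f n s w ≤ g n s w + h n s w)
    (hf : a ∈ cinfSet P f) (hh : b ∈ csupSet P h) : a - b ∈ cinfSet P g := by
  rw [mem_cinfSet_iff] at hf ⊢
  rw [mem_csupSet_iff] at hh
  refine tendsto_iSup_toOuterMeasure_of_subset_union P (fun n s w ⟨hw, hsupp⟩ => ?_) hf hh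
  by_contra! hout
  simp only [Set.mem_union, Set.mem_ofPred_eq, not_or, not_le] at hw hout
  linarith [hle n s w hsupp]

theorem mem_csupSet_of_csup_lt (hne : (csupSet P f).Nonempty) (hlt : csup P f < b) :
    b ∈ csupSet P f := by
  obtain ⟨a, ha, hab⟩ := exists_lt_of_csInf_lt hne hlt
  rw [mem_csupSet_iff] at ha ⊢
  refine tendsto_of_tendsto_of_tendsto_of_le_of_le tendsto_const_nhds ha
    (fun _ => zero_le) fun n => iSup_mono fun s => measure_mono fun w hw => ?_
  exact hab.le.trans hw

end Compound

section Triple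

variable {S : Type*} {A B C : ℕ → Type*} (P : ∀ n, S → PMF (A n × B n × C n)) {n : ℕ} {s : S}
  {x : A n} {y : B n} {z : C n}

theorem toReal_mX_ne_zero [∀ n, Fintype (B n)] [∀ n, Fintype (C n)]
    (h : P n s (x, y, z) ≠ 0) : (mX P n s x).toReal ≠ 0 :=
  ENNReal.toReal_ne_zero.2 ⟨by simpa [mX] using ⟨y, z, h⟩, by simp [mX, PMF.apply_ne_top]⟩

theorem toReal_mY_ne_zero [∀ n, Fintype (A n)] [∀ n, Fintype (C n)]
    (h : P n s (x, y, z) ≠ 0) : (mY P n s y).toReal ≠ 0 :=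
  ENNReal.toReal_ne_zero.2 ⟨by simpa [mY] using ⟨x, z, h⟩, by simp [mY, PMF.apply_ne_top]⟩

theorem toReal_mZ_ne_zero [∀ n, Fintype (A n)] [∀ n, Fintype (B n)]
    (h : P n s (x, y, z) ≠ 0) : (mZ P n s z).toReal ≠ 0 :=
  ENNReal.toReal_ne_zero.2 ⟨by simpa [mZ] using ⟨x, y, h⟩, by simp [mZ, PMF.apply_ne_top]⟩

theorem toReal_mXY_ne_zero [∀ n, Fintype (C n)]
    (h : P n s (x, y, z) ≠ 0) : (mXY P n s x y).toReal ≠ 0 :=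
  ENNReal.toReal_ne_zero.2 ⟨by simpa [mXY] using ⟨z, h⟩, by simp [mXY, PMF.apply_ne_top]⟩

theorem toReal_mXZ_ne_zero [∀ n, Fintype (B n)]
    (h : P n s (x, y, z) ≠ 0) : (mXZ P n s x z).toReal ≠ 0 :=
  ENNReal.toReal_ne_zero.2 ⟨by simpa [mXZ] using ⟨y, h⟩, by simp [mXZ, PMF.apply_ne_top]⟩

theorem toReal_mYZ_ne_zero [∀ n, Fintype (A n)]
    (h : P n s (x, y, z) ≠ 0) : (mYZ P n s y z).toReal ≠ 0 :=
  ENNReal.toReal_ne_zero.2 ⟨by simpa [mYZ] using ⟨x, h⟩, by simp [mYZ, PMF.apply_ne_top]⟩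

variable [∀ n, Fintype (A n)] [∀ n, Fintype (B n)]

/-- The law `P_{X|Z} P_{Y|Z} P_Z` under which `X` and `Y` are conditionally independent given `Z`. -/
def condProd (P : ∀ n, S → PMF (A n × B n × C n)) (n : ℕ) (s : S) (w : A n × B n × C n) : ℝ≥0∞ :=
  mXZ P n s w.1 w.2.2 * mYZ P n s w.2.1 w.2.2 / mZ P n s w.2.2

theorem iXYgZ_eq_log_div_condProd (w : A n × B n × C n) :
    iXYgZ P n s w = 1 / (n : ℝ) * Real.log ((P n s w).toReal / (condProd P n s w).toReal) := by
  simp only [iXYgZ, condProd, ENNReal.toReal_div, ENNReal.toReal_mul, div_div_eq_mul_div]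

theorem toReal_condProd_ne_zero {w : A n × B n × C n} (h : P n s w ≠ 0) :
    (condProd P n s w).toReal ≠ 0 := by
  obtain ⟨x, y, z⟩ := w
  rw [condProd, ENNReal.toReal_div, ENNReal.toReal_mul]
  exact div_ne_zero (mul_ne_zero (toReal_mXZ_ne_zero P h) (toReal_mYZ_ne_zero P h))
    (toReal_mZ_ne_zero P h)

variable [∀ n, Fintype (C n)]

theorem iXY_eq_iXZ_add_iXYgZ (h : P n s (x, y, z) ≠ 0)
    (hMarkov : P n s (x, y, z) * mY P n s y = mXY P n s x y * mYZ P n s y z) :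
    iXY P n s (x, y, z) = iXZ P n s (x, y, z) + iXYgZ P n s (x, y, z) := by
  have hp : (P n s (x, y, z)).toReal ≠ 0 :=
    ENNReal.toReal_ne_zero.2 ⟨h, PMF.apply_ne_top _ _⟩
  have hX := toReal_mX_ne_zero P h
  have hY := toReal_mY_ne_zero P h
  have hZ := toReal_mZ_ne_zero P h
  have hXY := toReal_mXY_ne_zero P h
  have hXZ := toReal_mXZ_ne_zero P h
  have hYZ := toReal_mYZ_ne_zero P h
  have hlogMarkov : Real.log (P n s (x, y, z)).toReal + Real.log (mY P n s y).toReal =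
      Real.log (mXY P n s x y).toReal + Real.log (mYZ P n s y z).toReal := by
    rw [← Real.log_mul hp hY, ← Real.log_mul hXY hYZ, ← ENNReal.toReal_mul,
      ← ENNReal.toReal_mul, hMarkov]
  simp only [iXY, iXZ, iXYgZ]
  rw [Real.log_div hXY (mul_ne_zero hX hY), Real.log_div hXZ (mul_ne_zero hX hZ),
    Real.log_div (mul_ne_zero hp hZ) (mul_ne_zero hXZ hYZ), Real.log_mul hX hY,
    Real.log_mul hX hZ, Real.log_mul hp hZ, Real.log_mul hXZ hYZ]
  linear_combination (-(1 / (n : ℝ))) * hlogMarkov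

theorem sum_mZ : ∑ z, mZ P n s z = 1 := by
  rw [← (P n s).tsum_coe, tsum_fintype, Fintype.sum_prod_prod_eq_sum_sum_sum]
  rfl

theorem sum_condProd : ∑ w, condProd P n s w = 1 := by
  rw [Fintype.sum_prod_prod_eq_sum_sum_sum, ← sum_mZ P (n := n) (s := s)]
  refine Finset.sum_congr rfl fun z _ => ?_
  have hY : ∑ y, mYZ P n s y z = mZ P n s z := Finset.sum_comm
  calc ∑ x, ∑ y, condProd P n s (x, y, z)
      = (∑ x, mXZ P n s x z) * (∑ y, mYZ P n s y z) / mZ P n s z := by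
        rw [div_eq_mul_inv, Finset.sum_mul_sum, Finset.sum_mul]
        simp only [condProd, div_eq_mul_inv, Finset.sum_mul]
    _ = mZ P n s z * mZ P n s z / mZ P n s z := by rw [hY]; rfl
    _ = mZ P n s z := by
        rcases eq_or_ne (mZ P n s z) 0 with h0 | h0
        · simp [h0]
        · exact ENNReal.mul_div_cancel_right h0 (by simp [mZ, PMF.apply_ne_top])

theorem neg_mem_cinfSet_iXYgZ {γ : ℝ} (hγ : 0 < γ) : -γ ∈ cinfSet P (iXYgZ P) := by
  rw [mem_cinfSet_iff]
  have hexp : Tendsto (fun n : ℕ => ENNReal.ofReal (Real.exp (-(n * γ)))) atTop (nhds 0) := by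
    rw [← ENNReal.ofReal_zero]
    exact ENNReal.tendsto_ofReal (Real.tendsto_exp_atBot.comp
      (tendsto_neg_atTop_atBot.comp (tendsto_natCast_atTop_atTop.atTop_mul_const hγ)))
  refine tendsto_of_tendsto_of_tendsto_of_le_of_le' tendsto_const_nhds hexp
    (Eventually.of_forall fun _ => zero_le) ?_
  filter_upwards [eventually_gt_atTop 0] with n hn
  refine iSup_le fun s => ?_
  calc (P n s).toOuterMeasure {w | iXYgZ P n s w ≤ -γ}
      ≤ (P n s).toOuterMeasure
          {w | Real.log ((P n s w).toReal / (condProd P n s w).toReal) ≤ -(n * γ)} := by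
        refine measure_mono fun w hw => ?_
        have hw' : _ ≤ -γ := hw
        rw [iXYgZ_eq_log_div_condProd, one_div, inv_mul_le_iff₀ (by exact_mod_cast hn)] at hw'
        exact hw'.trans_eq (by ring)
    _ ≤ ENNReal.ofReal (Real.exp (-(n * γ))) * ∑ w, condProd P n s w :=
        (P n s).toOuterMeasure_log_div_le_neg_le _ (fun _ => toReal_condProd_ne_zero P) _
    _ = ENNReal.ofReal (Real.exp (-(n * γ))) := by rw [sum_condProd, mul_one]

end Triple

theorem compound_data_processing_general {S : Type*}
    {A B C : ℕ → Type*} [∀ n, Fintype (A n)]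
    [∀ n, Fintype (B n)] [∀ n, Fintype (C n)]
    (P : ∀ n, S → PMF (A n × B n × C n))
    (hMarkov : ∀ n s x y c,
      P n s (x, y, c) * mY P n s y = mXY P n s x y * mYZ P n s y c)
    (h₁ : (cinfSet P (iXY P)).Nonempty) (h₂ : BddAbove (cinfSet P (iXY P)))
    (h₃ : (cinfSet P (iXZ P)).Nonempty) (h₄ : BddAbove (cinfSet P (iXZ P)))
    (h₅ : (csupSet P (iXYgZ P)).Nonempty) :
    cinf P (iXZ P) ≤ cinf P (iXY P) ∧
    (csup P (iXYgZ P) = 0 → cinf P (iXY P) = cinf P (iXZ P)) := by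
  have chain : ∀ n s w, P n s w ≠ 0 → iXY P n s w = iXZ P n s w + iXYgZ P n s w :=
    fun n s _ h => iXY_eq_iXZ_add_iXYgZ P h (hMarkov n s _ _ _)
  have hle : cinf P (iXZ P) ≤ cinf P (iXY P) :=
    csSup_le_csSup_of_forall_sub_mem h₃ h₂ fun R hR ε hε => by
      simpa only [← sub_eq_add_neg] using add_mem_cinfSet (fun n s w hw => (chain n s w hw).ge)
        hR (neg_mem_cinfSet_iXYgZ P hε)
  refine ⟨hle, fun hcsup => le_antisymm ?_ hle⟩
  exact csSup_le_csSup_of_forall_sub_mem h₁ h₄ fun R hR ε hε =>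
    sub_mem_cinfSet (fun n s w hw => (chain n s w hw).le) hR
      (mem_csupSet_of_csup_lt h₅ (hcsup ▸ hε))

/-- data processing inequality for compound inf-information rates: if
`X → Y → Z` is a Markov chain under every `P_{n,s}`, then (assuming finiteness of the
quantities involved) `cinf I(X;Y) ≥ cinf I(X;Z)`, with equality when `csup I(X;Y|Z) = 0`. -/
theorem compound_data_processing {S : Type*} [Nonempty S]
    {A B C : ℕ → Type*} [∀ n, Fintype (A n)] [∀ n, Nonempty (A n)]
    [∀ n, Fintype (B n)] [∀ n, Nonempty (B n)] [∀ n, Fintype (C n)] [∀ n, Nonempty (C n)]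
    (P : ∀ n, S → PMF (A n × B n × C n))
    (hMarkov : ∀ n s x y c,
      P n s (x, y, c) * mY P n s y = mXY P n s x y * mYZ P n s y c)
    (h₁ : (cinfSet P (iXY P)).Nonempty) (h₂ : BddAbove (cinfSet P (iXY P)))
    (h₃ : (cinfSet P (iXZ P)).Nonempty) (h₄ : BddAbove (cinfSet P (iXZ P)))
    (h₅ : (csupSet P (iXYgZ P)).Nonempty) (h₆ : BddBelow (csupSet P (iXYgZ P))) :
    cinf P (iXZ P) ≤ cinf P (iXY P) ∧
    (csup P (iXYgZ P) = 0 → cinf P (iXY P) = cinf P (iXZ P)) :=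
  compound_data_processing_general P hMarkov h₁ h₂ h₃ h₄ h₅
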